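/- The committal rates of stochastic NPG and GNPG are infinite: fix any a ∈ [K], η > 0 and θ̃_1 ∈ ℝ^K. (i) For the fixed-sampling NPG sequence θ̃_{t+1} := θ̃_t + η·r̂_a (where r̂_a is the IS estimate at θ̃_t with sampled action a), for every α ≥ 0 one has t^α·(1 − π_{θ̃_t}(a)) → 0 as t → ∞; hence κ(NPG, a) = ∞. (ii) For the fixed-sampling GNPG sequence θ̃_{t+1} := θ̃_t + η·g_a(θ̃_t)/‖g_a(θ̃_t)‖₂, for every α ≥ 0 one has t^α·(1 − π_{θ̃_t}(a)) → 0 as t → ∞; hence κ(GNPG, a) = ∞. -/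

import Mathlib

/-!
Along either fixed-sampling sequence the logit of the sampled action `a` grows at least linearly
(by `η r(a)` per NPG step, since `r̂_a(a) = r(a)/π(a) ≥ r(a)`, and by `η/√2` per GNPG step, since
`g_a(a) = r(a)(1 - π(a))` carries at least a `1/√2` share of the norm), while every other logit
never increases. Hence `1 - π_{θ_t}(a)` decays like `exp (-c t)`, which beats every power of `t`.
-/

open Finset Real Filter

/-- Softmax policy: `π_θ(a) = exp(θ(a)) / Σ_{a'} exp(θ(a'))`. -/
noncomputable def softmax {K : ℕ} (θ : Fin K → ℝ) (a : Fin K) : ℝ :=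
  Real.exp (θ a) / ∑ a', Real.exp (θ a')

/-- On-policy importance-sampling (IS) reward estimate for sampled action `a`:
`r̂_a(a') = 1{a' = a}·r(a')/π_θ(a')`. -/
noncomputable def isEst {K : ℕ} (r : Fin K → ℝ) (a : Fin K) (θ : Fin K → ℝ)
    (a' : Fin K) : ℝ :=
  if a' = a then r a' / softmax θ a' else 0

/-- On-policy IS stochastic softmax policy gradient for sampled action `a`:
`g_a(θ)(i) = 1{i = a}·r(a) − π_θ(i)·r(a)`. -/
noncomputable def stochPG {K : ℕ} (r : Fin K → ℝ) (a : Fin K) (θ : Fin K → ℝ)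
    (i : Fin K) : ℝ :=
  (if i = a then r a else 0) - softmax θ i * r a

/-- Euclidean norm of the stochastic softmax policy gradient. -/
noncomputable def stochPGNorm {K : ℕ} (r : Fin K → ℝ) (a : Fin K) (θ : Fin K → ℝ) : ℝ :=
  Real.sqrt (∑ i, stochPG r a θ i ^ 2)

section Softmax

variable {K : ℕ}

lemma sum_exp_pos (θ : Fin K → ℝ) (a : Fin K) : 0 < ∑ a', exp (θ a') :=
  sum_pos (fun _ _ => exp_pos _) ⟨a, mem_univ a⟩

lemma softmax_pos (θ : Fin K → ℝ) (a : Fin K) : 0 < softmax θ a :=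
  div_pos (exp_pos _) (sum_exp_pos θ a)

lemma softmax_le_one (θ : Fin K → ℝ) (a : Fin K) : softmax θ a ≤ 1 := by
  rw [softmax, div_le_one (sum_exp_pos θ a)]
  exact single_le_sum (fun i _ => (exp_pos _).le) (mem_univ a)

lemma one_sub_softmax (θ : Fin K → ℝ) (a : Fin K) :
    1 - softmax θ a = (∑ i ∈ univ.erase a, exp (θ i)) / ∑ a', exp (θ a') := by
  have := sum_exp_pos θ a
  rw [softmax, sum_erase_eq_sub (mem_univ a)]
  field_simp

lemma sum_erase_softmax (θ : Fin K → ℝ) (a : Fin K) :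
    ∑ i ∈ univ.erase a, softmax θ i = 1 - softmax θ a := by
  rw [one_sub_softmax, sum_div]
  rfl

lemma softmax_lt_one (hK : 2 ≤ K) (θ : Fin K → ℝ) (a : Fin K) : softmax θ a < 1 := by
  have : Nontrivial (Fin K) := Fin.nontrivial_iff_two_le.mpr hK
  obtain ⟨b, hb⟩ := exists_ne a
  have hrest : 0 < ∑ i ∈ univ.erase a, exp (θ i) :=
    sum_pos' (fun i _ => (exp_pos _).le) ⟨b, mem_erase.mpr ⟨hb, mem_univ b⟩, exp_pos _⟩
  have := div_pos hrest (sum_exp_pos θ a)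
  rw [← one_sub_softmax] at this
  linarith

lemma one_sub_softmax_le {θ θ₀ : Fin K → ℝ} {a : Fin K} (h : ∀ i, i ≠ a → θ i ≤ θ₀ i) :
    1 - softmax θ a ≤ (∑ i ∈ univ.erase a, exp (θ₀ i)) * exp (-θ a) := by
  rw [one_sub_softmax, exp_neg, ← div_eq_mul_inv]
  apply div_le_div₀ (sum_nonneg fun i _ => (exp_pos _).le)
  · exact sum_le_sum fun i hi => exp_le_exp.mpr (h i (mem_erase.mp hi).1)
  · exact exp_pos _
  · exact single_le_sum (fun i _ => (exp_pos _).le) (mem_univ a)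

end Softmax

lemma add_mul_le_of_add_le_succ {f : ℕ → ℝ} {c : ℝ} (h : ∀ t, f t + c ≤ f (t + 1)) (t : ℕ) :
    f 0 + c * t ≤ f t := by
  induction t with
  | zero => simp
  | succ t ih => push_cast; linarith [h t]

lemma tendsto_rpow_mul_one_sub_softmax {K : ℕ} {a : Fin K} {θ : ℕ → Fin K → ℝ} {c : ℝ}
    (hc : 0 < c) (ha : ∀ t, θ t a + c ≤ θ (t + 1) a)
    (hi : ∀ t i, i ≠ a → θ (t + 1) i ≤ θ t i) (α : ℝ) :
    Tendsto (fun t : ℕ => (t : ℝ) ^ α * (1 - softmax (θ t) a)) atTop (nhds 0) := by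
  set C := (∑ i ∈ univ.erase a, exp (θ 0 i)) * exp (-θ 0 a)
  have hbound (t : ℕ) : 1 - softmax (θ t) a ≤ C * exp (-c * t) := by
    have hrest (i) (hia : i ≠ a) : θ t i ≤ θ 0 i :=
      antitone_nat_of_succ_le (f := fun t => θ t i) (fun t => hi t i hia) (Nat.zero_le t)
    refine (one_sub_softmax_le hrest).trans ?_
    rw [mul_assoc, ← exp_add]
    gcongr
    linarith [add_mul_le_of_add_le_succ ha t]
  have hlim : Tendsto (fun t : ℕ => C * ((t : ℝ) ^ α * exp (-c * t))) atTop (nhds 0) := by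
    simpa using ((tendsto_rpow_mul_exp_neg_mul_atTop_nhds_zero α c hc).comp
      tendsto_natCast_atTop_atTop).const_mul C
  refine squeeze_zero (fun t => ?_) (fun t => ?_) hlim
  · exact mul_nonneg (rpow_nonneg t.cast_nonneg α) (by linarith [softmax_le_one (θ t) a])
  · calc (t : ℝ) ^ α * (1 - softmax (θ t) a) ≤ (t : ℝ) ^ α * (C * exp (-c * t)) := by
          gcongr; exact hbound t
      _ = C * ((t : ℝ) ^ α * exp (-c * t)) := by ring

section Estimators

variable {K : ℕ} {r : Fin K → ℝ} {a : Fin K}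

lemma le_isEst_self (hr : 0 ≤ r a) (θ : Fin K → ℝ) : r a ≤ isEst r a θ a := by
  simpa [isEst] using le_div_self hr (softmax_pos θ a) (softmax_le_one θ a)

lemma isEst_of_ne (θ : Fin K → ℝ) {i : Fin K} (hi : i ≠ a) : isEst r a θ i = 0 := by
  simp [isEst, hi]

lemma stochPG_self (θ : Fin K → ℝ) : stochPG r a θ a = r a * (1 - softmax θ a) := by
  rw [stochPG, if_pos rfl]; ring

lemma stochPG_of_ne (θ : Fin K → ℝ) {i : Fin K} (hi : i ≠ a) :
    stochPG r a θ i = -(softmax θ i * r a) := by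
  simp [stochPG, hi]

lemma stochPG_self_le_stochPGNorm (θ : Fin K → ℝ) : stochPG r a θ a ≤ stochPGNorm r a θ :=
  (le_abs_self _).trans <| (sqrt_sq_eq_abs _).symm.le.trans <| sqrt_le_sqrt <|
    single_le_sum (f := fun i => stochPG r a θ i ^ 2) (fun _ _ => sq_nonneg _) (mem_univ a)

/-- The off-`a` coordinates together have `ℓ²` norm at most their `ℓ¹` norm `r(a)(1 - π(a))`,
which is exactly the `a` coordinate. -/
lemma stochPGNorm_le (hr : 0 ≤ r a) (θ : Fin K → ℝ) :
    stochPGNorm r a θ ≤ √2 * stochPG r a θ a := by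
  have hga : 0 ≤ stochPG r a θ a := by
    rw [stochPG_self]; exact mul_nonneg hr (by linarith [softmax_le_one θ a])
  have hrest : ∑ i ∈ univ.erase a, stochPG r a θ i ^ 2 ≤ stochPG r a θ a ^ 2 := calc
    _ = ∑ i ∈ univ.erase a, (softmax θ i * r a) ^ 2 :=
        sum_congr rfl fun i hi => by rw [stochPG_of_ne θ (mem_erase.mp hi).1, neg_sq]
    _ ≤ (∑ i ∈ univ.erase a, softmax θ i * r a) ^ 2 :=
        sum_sq_le_sq_sum_of_nonneg fun i _ => mul_nonneg (softmax_pos θ i).le hr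
    _ = stochPG r a θ a ^ 2 := by rw [← sum_mul, sum_erase_softmax, stochPG_self, mul_comm]
  calc stochPGNorm r a θ ≤ √(2 * stochPG r a θ a ^ 2) := by
        rw [stochPGNorm, ← add_sum_erase _ _ (mem_univ a)]
        gcongr
        linarith
    _ = √2 * stochPG r a θ a := by rw [sqrt_mul zero_le_two, sqrt_sq hga]

lemma inv_sqrt_two_le_stochPG_div_stochPGNorm (hK : 2 ≤ K) (hr : 0 < r a) (θ : Fin K → ℝ) :
    (√2)⁻¹ ≤ stochPG r a θ a / stochPGNorm r a θ := by
  have hga : 0 < stochPG r a θ a := by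
    rw [stochPG_self]; exact mul_pos hr (by linarith [softmax_lt_one hK θ a])
  have hnorm := hga.trans_le (stochPG_self_le_stochPGNorm θ)
  rw [inv_eq_one_div, div_le_div_iff₀ (by positivity) hnorm, one_mul, mul_comm]
  exact stochPGNorm_le hr.le θ

lemma stochPG_div_stochPGNorm_nonpos (hr : 0 ≤ r a) (θ : Fin K → ℝ) {i : Fin K} (hi : i ≠ a) :
    stochPG r a θ i / stochPGNorm r a θ ≤ 0 := by
  rw [stochPG_of_ne θ hi, neg_div]
  exact neg_nonpos.mpr (div_nonneg (mul_nonneg (softmax_pos θ i).le hr) (sqrt_nonneg _))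

end Estimators

/-- The committal rates of stochastic NPG and GNPG are infinite: for the
fixed-sampling sequences (action `a` sampled forever)
`θN_{t+1} = θN_t + η·r̂_a` and `θG_{t+1} = θG_t + η·g_a(θG_t)/‖g_a(θG_t)‖₂`,
for every `α ≥ 0` one has `t^α·(1 − π_{θ_t}(a)) → 0`; hence
`κ(NPG, a) = κ(GNPG, a) = ∞`. -/
theorem committal_rate_npg_gnpg_infinite
    {K : ℕ} (hK : 2 ≤ K) (r : Fin K → ℝ)
    (hr : ∀ a, 0 < r a ∧ r a ≤ 1)
    (a : Fin K) (η : ℝ) (hη : 0 < η)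
    (θN θG : ℕ → Fin K → ℝ)
    (hN : ∀ t, θN (t + 1) = fun a' => θN t a' + η * isEst r a (θN t) a')
    (hG : ∀ t, θG (t + 1) = fun i =>
      θG t i + η * (stochPG r a (θG t) i / stochPGNorm r a (θG t))) :
    (∀ α : ℝ, 0 ≤ α →
      Tendsto (fun t : ℕ => (t : ℝ) ^ α * (1 - softmax (θN t) a)) atTop (nhds 0)) ∧
    (∀ α : ℝ, 0 ≤ α →
      Tendsto (fun t : ℕ => (t : ℝ) ^ α * (1 - softmax (θG t) a)) atTop (nhds 0)) := by
  have hra := (hr a).1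
  constructor
  · refine fun α _ => tendsto_rpow_mul_one_sub_softmax (c := η * r a) (by positivity)
      (fun t => ?_) (fun t i hi => ?_) α
    · rw [hN t]
      nlinarith [le_isEst_self hra.le (θN t)]
    · simp [hN t, isEst_of_ne _ hi]
  · refine fun α _ => tendsto_rpow_mul_one_sub_softmax (c := η * (√2)⁻¹) (by positivity)
      (fun t => ?_) (fun t i hi => ?_) α
    · rw [hG t]
      nlinarith [inv_sqrt_two_le_stochPG_div_stochPGNorm hK hra (θG t)]
    · rw [hG t]
      nlinarith [stochPG_div_stochPGNorm_nonpos hra.le (θG t) hi]
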